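/- arXiv:2312.07521 — 2 statements merged into one kernel-verified Lean document; each statement's English description precedes it below -/
import Mathlib

section
/- For k ≥ 2 and a, b > 0, let H_w be the weighted graph on k vertices with every pair joined by an edge of weight b/(k−1) and a loop of weight a/2 at each vertex (so each weighted degree is a+b, loops counting twice). Then ĥ_{H_w} = (b/(a+b))·(1 + 1/(k−1)). -/
open Finset
open scoped Classical

noncomputable section

/-- Edge weight in `H_w(a,b,k)`: every pair of distinct vertices is joined by an edge of
weight `b/(k-1)`, and each vertex carries a loop of weight `a/2`; a loop contributes twice
its weight to the degree, so the diagonal entry `a` below records the loop's degree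
contribution. Cross-set edge weight sums never involve loops. -/
def wgt (k : ℕ) (a b : ℝ) (i j : Fin k) : ℝ :=
  if i = j then a else b / ((k : ℝ) - 1)

/-- Weighted degree of a vertex (= a + b). -/
def wdeg (k : ℕ) (a b : ℝ) (i : Fin k) : ℝ := ∑ j, wgt k a b i j

/-- Volume of a vertex set. -/
def wvol (k : ℕ) (a b : ℝ) (A : Finset (Fin k)) : ℝ := ∑ i ∈ A, wdeg k a b i

/-- Total weight of edges between `A` and its complement. -/
def wcut (k : ℕ) (a b : ℝ) (A : Finset (Fin k)) : ℝ := ∑ i ∈ A, ∑ j ∈ Aᶜ, wgt k a b i j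

/-- Expansion-by-products `ĥ` of the weighted graph `H_w(a,b,k)`. -/
def whhat (k : ℕ) (a b : ℝ) : ℝ :=
  sInf { x | ∃ A : Finset (Fin k), A.Nonempty ∧ A ≠ univ ∧
    x = wcut k a b A * wvol k a b univ / (wvol k a b A * wvol k a b Aᶜ) }

lemma wdeg_eq (k : ℕ) (hk : 2 ≤ k) (a b : ℝ) (i : Fin k) : wdeg k a b i = a + b := by
  have hk1 : ((k : ℝ) - 1) ≠ 0 := by
    have : (2 : ℝ) ≤ (k : ℝ) := by exact_mod_cast hk
    linarith
  set c := b / ((k : ℝ) - 1) with hc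
  have : wdeg k a b i = ∑ j : Fin k, ((if i = j then a - c else 0) + c) := by
    unfold wdeg wgt
    apply Finset.sum_congr rfl
    intro j _
    by_cases h : i = j <;> simp [h] <;> rfl
  rw [this, Finset.sum_add_distrib, Finset.sum_ite_eq univ i (fun _ => a - c)]
  have hcb : ((k : ℝ) - 1) * c = b := by
    rw [hc]; field_simp
  simp only [Finset.mem_univ, if_true, Finset.sum_const, Finset.card_univ, Fintype.card_fin,
    nsmul_eq_mul]
  have hk1' : (1 : ℝ) ≤ (k : ℝ) := by
    have : (2 : ℝ) ≤ (k : ℝ) := by exact_mod_cast hk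
    linarith
  nlinarith [hcb]

lemma wvol_eq (k : ℕ) (hk : 2 ≤ k) (a b : ℝ) (A : Finset (Fin k)) :
    wvol k a b A = A.card * (a + b) := by
  unfold wvol
  rw [Finset.sum_congr rfl (fun i _ => wdeg_eq k hk a b i), Finset.sum_const, nsmul_eq_mul]

lemma wcut_eq (k : ℕ) (a b : ℝ) (A : Finset (Fin k)) :
    wcut k a b A = A.card * Aᶜ.card * (b / ((k : ℝ) - 1)) := by
  unfold wcut
  have h1 : ∀ i ∈ A, ∑ j ∈ Aᶜ, wgt k a b i j = Aᶜ.card * (b / ((k : ℝ) - 1)) := by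
    intro i hi
    have h2 : ∀ j ∈ Aᶜ, wgt k a b i j = b / ((k : ℝ) - 1) := by
      intro j hj
      have hij : i ≠ j := by
        intro h; rw [h] at hi; exact (Finset.mem_compl.mp hj) hi
      simp [wgt, hij]
    rw [Finset.sum_congr rfl h2, Finset.sum_const, nsmul_eq_mul]
  rw [Finset.sum_congr rfl h1, Finset.sum_const, nsmul_eq_mul]
  ring

lemma value_eq (k : ℕ) (hk : 2 ≤ k) (a b : ℝ) (ha : 0 < a) (hb : 0 < b)
    (A : Finset (Fin k)) (hA : A.Nonempty) (hA' : A ≠ univ) :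
    wcut k a b A * wvol k a b univ / (wvol k a b A * wvol k a b Aᶜ)
      = b / (a + b) * (1 + 1 / ((k : ℝ) - 1)) := by
  have hk2 : (2 : ℝ) ≤ (k : ℝ) := by exact_mod_cast hk
  have hk1 : ((k : ℝ) - 1) ≠ 0 := by linarith
  have hab : a + b ≠ 0 := by positivity
  have hm : (0 : ℝ) < A.card := by
    exact_mod_cast Finset.card_pos.mpr hA
  have hcompl : Aᶜ.Nonempty := by
    rw [← Finset.card_pos, Finset.card_compl]
    have : A.card < Fintype.card (Fin k) := by
      apply lt_of_le_of_ne (Finset.card_le_univ A)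
      intro h
      exact hA' (Finset.card_eq_iff_eq_univ A |>.mp (by simpa using h))
    omega
  have hn : (0 : ℝ) < Aᶜ.card := by
    exact_mod_cast Finset.card_pos.mpr hcompl
  have hcard : (A.card : ℝ) + Aᶜ.card = k := by
    rw [← Nat.cast_add]
    norm_cast
    rw [Finset.card_add_card_compl]
    simp
  rw [wcut_eq, wvol_eq k hk, wvol_eq k hk, wvol_eq k hk]
  simp only [Finset.card_univ, Fintype.card_fin]
  field_simp
  ring

/-- For `k ≥ 2` and `a, b > 0`, the weighted graph `H_w(a,b,k)` (complete graph
on `k` vertices with edge weights `b/(k-1)` plus a loop of weight `a/2` at each vertex)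
satisfies `ĥ_{H_w} = (b/(a+b))·(1 + 1/(k-1))`. -/
theorem stmt18 (k : ℕ) (hk : 2 ≤ k) (a b : ℝ) (ha : 0 < a) (hb : 0 < b) :
    whhat k a b = b / (a + b) * (1 + 1 / ((k : ℝ) - 1)) := by
  have hkpos : 0 < k := by omega
  have hset : { x | ∃ A : Finset (Fin k), A.Nonempty ∧ A ≠ univ ∧
      x = wcut k a b A * wvol k a b univ / (wvol k a b A * wvol k a b Aᶜ) }
      = {b / (a + b) * (1 + 1 / ((k : ℝ) - 1))} := by
    ext x
    simp only [Set.mem_setOf_eq, Set.mem_singleton_iff]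
    constructor
    · rintro ⟨A, hA, hA', rfl⟩
      exact value_eq k hk a b ha hb A hA hA'
    · rintro rfl
      refine ⟨{(⟨0, hkpos⟩ : Fin k)}, Finset.singleton_nonempty _, ?_, ?_⟩
      · intro h
        have := congrArg Finset.card h
        simp at this
        omega
      · exact (value_eq k hk a b ha hb _ (Finset.singleton_nonempty _) (by
          intro h
          have := congrArg Finset.card h
          simp at this
          omega)).symm
  unfold whhat
  rw [hset, csInf_singleton]
end
end

section
/- For ℓ ≥ 2, the windmill graph W_ℓ, formed by taking a star with center v and 2ℓ leaves and adding a perfect matching on the leaves, satisfies h_{W_ℓ} = 1/2 and q*(W_ℓ) ≥ (6ℓ − 8)/(9ℓ²) > 0. -/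
open Finset
open scoped Classical

noncomputable section

variable {V : Type*} [Fintype V]

/-- Number of edges between `A` and `B` (each cross edge counted once when `A`,`B` disjoint). -/
def ecut (G : SimpleGraph V) (A B : Finset V) : ℝ :=
  ((A ×ˢ B).filter fun p => G.Adj p.1 p.2).card

/-- Number of edges inside `A`. -/
def ein (G : SimpleGraph V) (A : Finset V) : ℝ := ecut G A A / 2

/-- Volume of a vertex set: sum of degrees. -/
def gvol (G : SimpleGraph V) (A : Finset V) : ℝ := ∑ v ∈ A, (G.degree v : ℝ)

/-- Number of edges of `G`. -/
def edgecount (G : SimpleGraph V) : ℝ := (G.edgeFinset.card : ℝ)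

/-- Conductance (Cheeger constant) `h_G`. -/
def conduct (G : SimpleGraph V) : ℝ :=
  sInf { x | ∃ A : Finset V, A.Nonempty ∧ A ≠ univ ∧
    x = ecut G A Aᶜ / min (gvol G A) (gvol G Aᶜ) }

/-- Expansion-by-products `ĥ_G`. -/
def hhat (G : SimpleGraph V) : ℝ :=
  sInf { x | ∃ A : Finset V, A.Nonempty ∧ A ≠ univ ∧
    x = ecut G A Aᶜ * gvol G univ / (gvol G A * gvol G Aᶜ) }

/-- Modularity score of a vertex partition. -/
def modScore (G : SimpleGraph V) (P : Finpartition (univ : Finset V)) : ℝ :=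
  (∑ A ∈ P.parts, ein G A) / edgecount G
    - (∑ A ∈ P.parts, (gvol G A) ^ 2) / (4 * (edgecount G) ^ 2)

/-- Modularity `q*(G)`: maximum modularity score over vertex partitions. -/
def modularity (G : SimpleGraph V) : ℝ :=
  sSup { x | ∃ P : Finpartition (univ : Finset V), x = modScore G P }

/-- The windmill graph `W_ℓ`: a star with center `none` and `2ℓ` leaves, plus a perfect
matching on the leaves (leaf `i` is matched to leaf `j` iff `i ≠ j` and `⌊i/2⌋ = ⌊j/2⌋`). -/
def windmill (l : ℕ) : SimpleGraph (Option (Fin (2 * l))) :=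
  SimpleGraph.fromRel fun x y =>
    x = none ∨ y = none ∨
      ∃ i j : Fin (2 * l), x = some i ∧ y = some j ∧ (i : ℕ) / 2 = (j : ℕ) / 2

set_option linter.unusedSectionVars false

lemma ecut_eq_sum (G : SimpleGraph V) (A B : Finset V) :
    ecut G A B = ∑ a ∈ A, ((B.filter (G.Adj a)).card : ℝ) := by
  have : ((A ×ˢ B).filter fun p => G.Adj p.1 p.2).card
      = ∑ a ∈ A, (B.filter (G.Adj a)).card := by
    rw [Finset.card_filter, Finset.sum_product]
    exact Finset.sum_congr rfl fun a _ => (Finset.card_filter _ _).symm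
  simp [ecut, this]

lemma ecut_comm (G : SimpleGraph V) (A B : Finset V) : ecut G A B = ecut G B A := by
  unfold ecut
  norm_cast
  apply Finset.card_bij' (fun p _ => p.swap) (fun p _ => p.swap) <;>
    simp +contextual [Finset.mem_product, G.adj_comm, and_comm]

lemma gvol_eq (G : SimpleGraph V) (A : Finset V) : gvol G A = ecut G A univ := by
  rw [ecut_eq_sum]; unfold gvol
  congr 1 with v
  rw [← SimpleGraph.neighborFinset_eq_filter, SimpleGraph.degree]

lemma ecut_union [DecidableEq V] (G : SimpleGraph V) {A B C : Finset V} (h : Disjoint B C) :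
    ecut G A (B ∪ C) = ecut G A B + ecut G A C := by
  simp only [ecut_eq_sum, filter_union, ← Finset.sum_add_distrib]
  congr 1 with a
  rw [Finset.card_union_of_disjoint (Finset.disjoint_filter_filter h)]
  push_cast; ring

lemma gvol_split (G : SimpleGraph V) (A : Finset V) :
    gvol G A = ecut G A A + ecut G A Aᶜ := by
  rw [gvol_eq, ← ecut_union G disjoint_compl_right, Finset.union_compl]

lemma ecut_compl_val (G : SimpleGraph V) (A : Finset V) :
    ecut G A Aᶜ = gvol G A - ecut G A A := by
  have := gvol_split G A; linarith

lemma gvol_compl (G : SimpleGraph V) (A : Finset V) :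
    gvol G Aᶜ = gvol G univ - gvol G A := by
  have : gvol G A + gvol G Aᶜ = gvol G univ := Finset.sum_add_sum_compl A _
  linarith

lemma mem_compl' {A : Finset V} {v : V} : v ∈ Aᶜ ↔ v ∉ A := Finset.mem_compl

lemma compl_nonempty_of_ne_univ {A : Finset V} (h : A ≠ univ) : (Aᶜ).Nonempty := by
  rw [Finset.nonempty_iff_ne_empty]
  intro h0
  apply h
  rw [← compl_compl A, h0, Finset.compl_empty]

lemma ecut_pair [DecidableEq V] (G : SimpleGraph V) {x y : V} (hxy : x ≠ y) (hadj : G.Adj x y) :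
    ecut G {x, y} {x, y} = 2 := by
  rw [ecut_eq_sum, Finset.sum_pair hxy]
  have h1 : ({x, y} : Finset V).filter (G.Adj x) = {y} := by
    ext z
    simp only [Finset.mem_filter, Finset.mem_insert, Finset.mem_singleton]
    constructor
    · rintro ⟨h | h, ha⟩
      · subst h; exact absurd ha (G.irrefl)
      · exact h
    · rintro rfl; exact ⟨Or.inr rfl, hadj⟩
  have h2 : ({x, y} : Finset V).filter (G.Adj y) = {x} := by
    ext z
    simp only [Finset.mem_filter, Finset.mem_insert, Finset.mem_singleton]
    constructor
    · rintro ⟨h | h, ha⟩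
      · exact h
      · subst h; exact absurd ha (G.irrefl)
    · rintro rfl; exact ⟨Or.inl rfl, G.adj_symm hadj⟩
  rw [h1, h2]
  norm_num

lemma ecut_triple [DecidableEq V] (G : SimpleGraph V) {x y z : V} (hxy : x ≠ y) (hxz : x ≠ z) (hyz : y ≠ z)
    (axy : G.Adj x y) (axz : G.Adj x z) (ayz : G.Adj y z) :
    ecut G {x, y, z} {x, y, z} = 6 := by
  have hx : x ∉ ({y, z} : Finset V) := by simp [hxy, hxz]
  rw [ecut_eq_sum, Finset.sum_insert hx, Finset.sum_pair hyz]
  have hfx : ({x, y, z} : Finset V).filter (G.Adj x) = {y, z} := by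
    ext w
    simp only [Finset.mem_filter, Finset.mem_insert, Finset.mem_singleton]
    constructor
    · rintro ⟨h | h | h, ha⟩
      · subst h; exact absurd ha (G.irrefl)
      · exact Or.inl h
      · exact Or.inr h
    · rintro (rfl | rfl)
      · exact ⟨Or.inr (Or.inl rfl), axy⟩
      · exact ⟨Or.inr (Or.inr rfl), axz⟩
  have hfy : ({x, y, z} : Finset V).filter (G.Adj y) = {x, z} := by
    ext w
    simp only [Finset.mem_filter, Finset.mem_insert, Finset.mem_singleton]
    constructor
    · rintro ⟨h | h | h, ha⟩
      · exact Or.inl h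
      · subst h; exact absurd ha (G.irrefl)
      · exact Or.inr h
    · rintro (rfl | rfl)
      · exact ⟨Or.inl rfl, G.adj_symm axy⟩
      · exact ⟨Or.inr (Or.inr rfl), ayz⟩
  have hfz : ({x, y, z} : Finset V).filter (G.Adj z) = {x, y} := by
    ext w
    simp only [Finset.mem_filter, Finset.mem_insert, Finset.mem_singleton]
    constructor
    · rintro ⟨h | h | h, ha⟩
      · exact Or.inl h
      · exact Or.inr h
      · subst h; exact absurd ha (G.irrefl)
    · rintro (rfl | rfl)
      · exact ⟨Or.inl rfl, G.adj_symm axz⟩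
      · exact ⟨Or.inr (Or.inl rfl), G.adj_symm ayz⟩
  rw [hfx, hfy, hfz, Finset.card_pair hyz, Finset.card_pair hxz, Finset.card_pair hxy]
  norm_num

lemma wadj_none_some (l : ℕ) (i : Fin (2 * l)) : (windmill l).Adj none (some i) := by
  simp [windmill, SimpleGraph.fromRel_adj]

lemma wadj_some_none (l : ℕ) (i : Fin (2 * l)) : (windmill l).Adj (some i) none :=
  ((windmill l).adj_comm _ _).1 (wadj_none_some l i)

lemma wadj_some_some (l : ℕ) (i j : Fin (2 * l)) :
    (windmill l).Adj (some i) (some j) ↔ (i : ℕ) ≠ (j : ℕ) ∧ (i : ℕ) / 2 = (j : ℕ) / 2 := by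
  rw [windmill, SimpleGraph.fromRel_adj]
  constructor
  · rintro ⟨hne, (h | h | ⟨a, b, ha, hb, hab⟩) | (h | h | ⟨a, b, ha, hb, hab⟩)⟩
    · exact absurd h (by simp)
    · exact absurd h (by simp)
    · obtain rfl := Option.some_injective _ ha
      obtain rfl := Option.some_injective _ hb
      exact ⟨fun hij => hne (congrArg some (Fin.ext hij)), hab⟩
    · exact absurd h (by simp)
    · exact absurd h (by simp)
    · obtain rfl := Option.some_injective _ ha
      obtain rfl := Option.some_injective _ hb
      exact ⟨fun hij => hne (congrArg some (Fin.ext hij)), hab.symm⟩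
  · rintro ⟨hne, h⟩
    exact ⟨fun hc => hne (congrArg Fin.val (Option.some_injective _ hc)),
      Or.inl (Or.inr (Or.inr ⟨i, j, rfl, rfl, h⟩))⟩

lemma wdeg_none (l : ℕ) : (windmill l).degree none = 2 * l := by
  rw [SimpleGraph.degree, SimpleGraph.neighborFinset_eq_filter]
  have : (univ.filter ((windmill l).Adj none)) = univ.image some := by
    ext x
    cases x with
    | none => simp [SimpleGraph.irrefl]
    | some i => simp [wadj_none_some]
  rw [this, Finset.card_image_of_injective _ (Option.some_injective _)]
  simp

lemma wdeg_some (l : ℕ) (i : Fin (2 * l)) : (windmill l).degree (some i) = 2 := by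
  rw [SimpleGraph.degree, SimpleGraph.neighborFinset_eq_filter]
  have hlt : (if (i : ℕ) % 2 = 0 then (i : ℕ) + 1 else (i : ℕ) - 1) < 2 * l := by
    have := i.isLt; split <;> omega
  set p : Fin (2 * l) := ⟨_, hlt⟩ with hp
  have hpv : (p : ℕ) = if (i : ℕ) % 2 = 0 then (i : ℕ) + 1 else (i : ℕ) - 1 := rfl
  have : (univ.filter ((windmill l).Adj (some i))) = {none, some p} := by
    ext x
    cases x with
    | none => simp [wadj_some_none]
    | some j =>
      simp only [Finset.mem_filter, Finset.mem_univ, true_and, Finset.mem_insert,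
        Finset.mem_singleton, wadj_some_some, Option.some.injEq, reduceCtorEq, false_or]
      have hi := i.isLt
      constructor
      · rintro ⟨hne, h⟩
        apply Fin.ext
        show (j : ℕ) = (p : ℕ)
        rw [hpv]; split <;> omega
      · rintro rfl
        rw [hpv]
        constructor <;> [skip; skip] <;> split <;> omega
  rw [this]
  rw [Finset.card_insert_of_notMem (by simp), Finset.card_singleton]

lemma wgvol_univ (l : ℕ) : gvol (windmill l) univ = 6 * l := by
  unfold gvol
  rw [Fintype.sum_option]
  simp [wdeg_none, wdeg_some]
  ring

lemma wedgecount (l : ℕ) : edgecount (windmill l) = 3 * l := by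
  have h := SimpleGraph.sum_degrees_eq_twice_card_edges (windmill l)
  have h2 : gvol (windmill l) univ = 2 * edgecount (windmill l) := by
    unfold gvol edgecount
    exact_mod_cast congrArg (fun n : ℕ => (n : ℝ)) h
  have := wgvol_univ l
  rw [h2] at this
  linarith

/-- The key lower bound for sets not containing the centre. -/
lemma windmill_half_le (l : ℕ) (S B : Finset (Option (Fin (2 * l))))
    (hS : S.Nonempty) (hc : none ∉ S) (hu : ∀ v, v ∈ S ∨ v ∈ B) :
    1 / 2 ≤ ecut (windmill l) S B / min (gvol (windmill l) S) (gvol (windmill l) B) := by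
  set G := windmill l with hG
  have hnB : none ∈ B := by
    rcases hu none with h | h
    · exact absurd h hc
    · exact h
  have hvolS : gvol G S = 2 * S.card := by
    unfold gvol
    have h2 : ∀ v ∈ S, ((G.degree v : ℕ) : ℝ) = 2 := by
      intro v hv
      cases v with
      | none => exact absurd hv hc
      | some i => rw [hG, wdeg_some]; norm_num
    rw [Finset.sum_congr rfl h2, Finset.sum_const, nsmul_eq_mul]
    ring
  have hecut : (S.card : ℝ) ≤ ecut G S B := by
    rw [ecut_eq_sum]
    calc (S.card : ℝ) = ∑ _a ∈ S, (1 : ℝ) := by simp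
    _ ≤ _ := by
        apply Finset.sum_le_sum
        intro a ha
        have hmem : none ∈ B.filter (G.Adj a) := by
          rw [Finset.mem_filter]
          refine ⟨hnB, ?_⟩
          cases a with
          | none => exact absurd ha hc
          | some i => exact wadj_some_none l i
        have : 0 < (B.filter (G.Adj a)).card := Finset.card_pos.2 ⟨_, hmem⟩
        exact_mod_cast this
  have hcardpos : 0 < (S.card : ℝ) := by exact_mod_cast Finset.card_pos.2 hS
  have hvolB : (0 : ℝ) < gvol G B := by
    unfold gvol
    apply Finset.sum_pos' (fun v _ => by positivity)
    refine ⟨none, hnB, ?_⟩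
    rw [hG, wdeg_none]
    have := hS
    rcases hS with ⟨s, hs⟩
    cases s with
    | none => exact absurd hs hc
    | some i =>
      have h0 : 0 < 2 * l := by have := i.isLt; omega
      exact_mod_cast h0
  have hminpos : 0 < min (gvol G S) (gvol G B) := by
    apply lt_min
    · rw [hvolS]; positivity
    · exact hvolB
  have hminle : min (gvol G S) (gvol G B) ≤ 2 * S.card := by
    rw [← hvolS]; exact min_le_left _ _
  rw [le_div_iff₀ hminpos]
  linarith

lemma supIndep_of_pairwise (S : Finset (Finset V))
    (h : ∀ s ∈ S, ∀ t ∈ S, s ≠ t → ∀ v, v ∈ s → v ∉ t) : S.SupIndep id := by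
  intro t ht i hi hit
  rw [Finset.disjoint_left]
  intro a ha hat
  obtain ⟨u, hu, hau⟩ := Finset.mem_sup.1 hat
  have hiu : i ≠ u := by rintro rfl; exact hit hu
  exact h i hi u (ht hu) hiu a ha hau

lemma conduct_eq_half_aux (G : SimpleGraph V)
    (hlb : ∀ A : Finset V, A.Nonempty → A ≠ univ →
      1/2 ≤ ecut G A Aᶜ / min (gvol G A) (gvol G Aᶜ))
    (A₀ : Finset V) (h1 : A₀.Nonempty) (h2 : A₀ ≠ univ)
    (h3 : (1:ℝ)/2 = ecut G A₀ A₀ᶜ / min (gvol G A₀) (gvol G A₀ᶜ)) :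
    conduct G = 1 / 2 := by
  have hlb' : ∀ x ∈ { x | ∃ A : Finset V, A.Nonempty ∧ A ≠ univ ∧
      x = ecut G A Aᶜ / min (gvol G A) (gvol G Aᶜ) }, (1/2 : ℝ) ≤ x := by
    rintro x ⟨A, hA, hAu, rfl⟩
    exact hlb A hA hAu
  have hmem : (1/2 : ℝ) ∈ { x | ∃ A : Finset V, A.Nonempty ∧ A ≠ univ ∧
      x = ecut G A Aᶜ / min (gvol G A) (gvol G Aᶜ) } := ⟨A₀, h1, h2, h3⟩
  exact le_antisymm (csInf_le ⟨1/2, fun x hx => hlb' x hx⟩ hmem) (le_csInf ⟨1/2, hmem⟩ hlb')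

lemma finpartition_finite : Finite (Finpartition (univ : Finset V)) :=
  Finite.of_injective (fun P => P.parts) fun _ _ h => Finpartition.ext h

lemma modularity_ge_aux (G : SimpleGraph V) (c : ℝ)
    (P : Finpartition (univ : Finset V)) (h : c ≤ modScore G P) : c ≤ modularity G := by
  haveI : Finite (Finpartition (univ : Finset V)) := finpartition_finite
  have hbdd : BddAbove { x | ∃ P : Finpartition (univ : Finset V), x = modScore G P } := by
    have hset : { x | ∃ P : Finpartition (univ : Finset V), x = modScore G P }
        = Set.range (fun P => modScore G P) := by
      ext x; simp [Set.mem_range, eq_comm]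
    rw [hset]
    exact (Set.finite_range _).bddAbove
  exact le_csSup_of_le hbdd ⟨P, rfl⟩ h

lemma windmill_conduct (l : ℕ) (hl : 2 ≤ l) : conduct (windmill l) = 1 / 2 := by
  have h2l : 2 ≤ 2 * l := by omega
  set G := windmill l with hG
  set a0 : Fin (2*l) := ⟨0, by omega⟩ with ha0
  set a1 : Fin (2*l) := ⟨1, by omega⟩ with ha1
  have hne01 : (some a0 : Option (Fin (2*l))) ≠ some a1 := by
    simp [ha0, ha1, Fin.ext_iff]
  set A : Finset (Option (Fin (2*l))) := {some a0, some a1} with hAdef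
  have hadj : G.Adj (some a0) (some a1) := by
    rw [hG, wadj_some_some]; simp [ha0, ha1]
  have hgvolA : gvol G A = 4 := by
    unfold gvol
    rw [hAdef, Finset.sum_pair hne01, hG, wdeg_some, wdeg_some]
    norm_num
  have hecutAA : ecut G A A = 2 := ecut_pair G hne01 hadj
  have hl' : (2 : ℝ) ≤ l := by exact_mod_cast hl
  refine conduct_eq_half_aux G ?_ A ?_ ?_ ?_
  · -- lower bound
    intro B hB hBu
    by_cases hn : none ∈ B
    · rw [ecut_comm, min_comm]
      refine windmill_half_le l _ B (compl_nonempty_of_ne_univ hBu) ?_ ?_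
      · intro h; exact (mem_compl'.1 h) hn
      · intro v
        by_cases hv : v ∈ B
        · exact Or.inr hv
        · exact Or.inl (mem_compl'.2 hv)
    · refine windmill_half_le l B _ hB hn ?_
      intro v
      by_cases hv : v ∈ B
      · exact Or.inl hv
      · exact Or.inr (mem_compl'.2 hv)
  · exact ⟨some a0, by simp [hAdef]⟩
  · -- A ≠ univ
    intro h
    have : (none : Option (Fin (2*l))) ∈ A := h ▸ Finset.mem_univ _
    simp [hAdef] at this
  · -- the value
    rw [ecut_compl_val, gvol_compl, wgvol_univ, hgvolA, hecutAA]
    rw [min_eq_left (by linarith)]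
    norm_num

lemma windmill_modularity (l : ℕ) (hl : 2 ≤ l) :
    (6 * (l : ℝ) - 8) / (9 * (l : ℝ) ^ 2) ≤ modularity (windmill l) := by
  have h2l : 2 ≤ 2 * l := by omega
  set G := windmill l with hG
  -- the partition into triangles
  set fib : Option (Fin (2*l)) → Fin l :=
    fun v => Option.elim v ⟨0, by omega⟩ (fun i => ⟨(i : ℕ)/2, by have := i.isLt; omega⟩)
    with hfibdef
  set fiber : Fin l → Finset (Option (Fin (2*l))) :=
    fun k => univ.filter (fun v => fib v = k) with hfiberdef
  have hmemfib : ∀ v, v ∈ fiber (fib v) := fun v => Finset.mem_filter.2 ⟨mem_univ v, rfl⟩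
  have hfibval : ∀ (i : Fin (2*l)) (k : Fin l), fib (some i) = k ↔ (i : ℕ)/2 = (k : ℕ) := by
    intro i k
    rw [hfibdef]
    simp [Fin.ext_iff]
  have hrep : ∀ k : Fin l, (some ⟨2*(k:ℕ), by have := k.isLt; omega⟩ : Option (Fin (2*l)))
      ∈ fiber k := by
    intro k
    refine Finset.mem_filter.2 ⟨mem_univ _, ?_⟩
    rw [hfibval]
    show 2 * (k : ℕ) / 2 = (k : ℕ)
    omega
  have hfib_inj : ∀ k ∈ (univ : Finset (Fin l)), ∀ k' ∈ (univ : Finset (Fin l)),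
      fiber k = fiber k' → k = k' := by
    intro k _ k' _ h
    have h1 := hrep k
    rw [h] at h1
    exact ((Finset.mem_filter.1 (hrep k)).2).symm.trans (Finset.mem_filter.1 h1).2
  -- the special elements
  set k0 : Fin l := ⟨0, by omega⟩ with hk0
  set b0 : Option (Fin (2*l)) := some ⟨0, by omega⟩ with hb0
  set b1 : Option (Fin (2*l)) := some ⟨1, by omega⟩ with hb1
  have hneb : b0 ≠ b1 := by simp [hb0, hb1, Fin.ext_iff]
  have hn0 : (none : Option (Fin (2*l))) ≠ b0 := by simp [hb0]
  have hn1 : (none : Option (Fin (2*l))) ≠ b1 := by simp [hb1]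
  have hfiber0 : fiber k0 = {none, b0, b1} := by
    ext v
    cases v with
    | none =>
      simp only [hfiberdef, Finset.mem_filter, Finset.mem_univ, true_and,
        Finset.mem_insert, Finset.mem_singleton]
      exact iff_of_true rfl (Or.inl trivial)
    | some i =>
      simp only [hfiberdef, Finset.mem_filter, Finset.mem_univ, true_and,
        Finset.mem_insert, Finset.mem_singleton, hb0, hb1, Option.some.injEq, reduceCtorEq,
        false_or, hfibval, Fin.ext_iff]
      show (i:ℕ)/2 = (k0:ℕ) ↔ _
      rw [hk0]
      show (i:ℕ)/2 = 0 ↔ (i:ℕ) = 0 ∨ (i:ℕ) = 1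
      omega
  have hfiberk : ∀ k : Fin l, k ≠ k0 →
      fiber k = {(some ⟨2*(k:ℕ), by have := k.isLt; omega⟩ : Option (Fin (2*l))),
                 (some ⟨2*(k:ℕ)+1, by have := k.isLt; omega⟩ : Option (Fin (2*l)))} := by
    intro k hk
    have hkval : (k : ℕ) ≠ 0 := by
      intro h; exact hk (by rw [hk0]; exact Fin.ext h)
    ext v
    cases v with
    | none =>
      simp only [hfiberdef, Finset.mem_filter, Finset.mem_univ, true_and,
        Finset.mem_insert, Finset.mem_singleton, reduceCtorEq, or_self, iff_false]
      intro h
      apply hkval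
      have : (0 : ℕ) = (k : ℕ) := congrArg Fin.val h
      omega
    | some i =>
      simp only [hfiberdef, Finset.mem_filter, Finset.mem_univ, true_and,
        Finset.mem_insert, Finset.mem_singleton, Option.some.injEq, hfibval, Fin.ext_iff]
      show (i:ℕ)/2 = (k:ℕ) ↔ (i:ℕ) = 2*(k:ℕ) ∨ (i:ℕ) = 2*(k:ℕ)+1
      omega
  -- adjacency facts
  have hadj01 : G.Adj b0 b1 := by
    rw [hG, hb0, hb1, wadj_some_some]; norm_num
  have hadjn0 : G.Adj none b0 := by rw [hG, hb0]; exact wadj_none_some l _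
  have hadjn1 : G.Adj none b1 := by rw [hG, hb1]; exact wadj_none_some l _
  -- per-fiber values
  have hein0 : ein G (fiber k0) = 3 := by
    rw [ein, hfiber0, ecut_triple G hn0 hn1 hneb hadjn0 hadjn1 hadj01]
    norm_num
  have hgvol0 : gvol G (fiber k0) = 2 * l + 4 := by
    rw [hfiber0]
    unfold gvol
    rw [Finset.sum_insert (by simp [hb0, hb1]), Finset.sum_pair hneb,
      hG, hb0, hb1, wdeg_none, wdeg_some, wdeg_some]
    push_cast; ring
  have heink : ∀ k : Fin l, k ≠ k0 → ein G (fiber k) = 1 := by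
    intro k hk
    have hkl := k.isLt
    rw [ein, hfiberk k hk]
    have hne : (some ⟨2*(k:ℕ), by omega⟩ : Option (Fin (2*l)))
        ≠ some ⟨2*(k:ℕ)+1, by omega⟩ := by simp [Fin.ext_iff]
    have hadj : G.Adj (some ⟨2*(k:ℕ), by omega⟩) (some ⟨2*(k:ℕ)+1, by omega⟩) := by
      rw [hG, wadj_some_some]
      constructor
      · show 2*(k:ℕ) ≠ 2*(k:ℕ)+1; omega
      · show 2*(k:ℕ)/2 = (2*(k:ℕ)+1)/2; omega
    rw [ecut_pair G hne hadj]
    norm_num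
  have hgvolk : ∀ k : Fin l, k ≠ k0 → gvol G (fiber k) = 4 := by
    intro k hk
    have hkl := k.isLt
    rw [hfiberk k hk]
    unfold gvol
    have hne : (some ⟨2*(k:ℕ), by omega⟩ : Option (Fin (2*l)))
        ≠ some ⟨2*(k:ℕ)+1, by omega⟩ := by simp [Fin.ext_iff]
    rw [Finset.sum_pair hne, hG, wdeg_some, wdeg_some]
    norm_num
  -- total sums (over the image of `fiber`)
  have hl1 : (1 : ℕ) ≤ l := by omega
  have hsum_ein : ∑ A ∈ (univ : Finset (Fin l)).image fiber, ein G A = 3 + ((l : ℝ) - 1) := by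
    rw [Finset.sum_image hfib_inj, ← Finset.add_sum_erase _ _ (Finset.mem_univ k0), hein0]
    congr 1
    rw [Finset.sum_congr rfl (fun k hk => heink k (Finset.mem_erase.1 hk).1),
      Finset.sum_const, Finset.card_erase_of_mem (Finset.mem_univ _), Finset.card_univ,
      Fintype.card_fin, nsmul_eq_mul, mul_one]
    push_cast [hl1]
    ring
  have hsum_vol : ∑ A ∈ (univ : Finset (Fin l)).image fiber, (gvol G A) ^ 2
      = (2 * (l : ℝ) + 4) ^ 2 + ((l : ℝ) - 1) * 16 := by
    rw [Finset.sum_image hfib_inj, ← Finset.add_sum_erase _ _ (Finset.mem_univ k0), hgvol0]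
    congr 1
    rw [Finset.sum_congr rfl (fun k hk => by rw [hgvolk k (Finset.mem_erase.1 hk).1]; try norm_num),
      Finset.sum_const, Finset.card_erase_of_mem (Finset.mem_univ _), Finset.card_univ,
      Fintype.card_fin, nsmul_eq_mul]
    push_cast [hl1]
    ring
  have hlpos : (0 : ℝ) < l := by positivity
  have hl' : (2 : ℝ) ≤ l := by exact_mod_cast hl
  -- assemble the partition and conclude
  refine modularity_ge_aux G _ (@Finpartition.mk _
    (@Finset.instLattice _ (fun a b => Classical.propDecidable (a = b))) _ _
    ((univ : Finset (Fin l)).image fiber) ?_ ?_ ?_) ?_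
  · -- supIndep
    apply supIndep_of_pairwise
    intro s hs t ht hst v hv hvt
    simp only [Finset.mem_image] at hs ht
    obtain ⟨k, _, rfl⟩ := hs
    obtain ⟨k', _, rfl⟩ := ht
    exact hst (by
      rw [((Finset.mem_filter.1 hv).2).symm.trans (Finset.mem_filter.1 hvt).2])
  · -- sup_parts
    ext v
    simp only [Finset.mem_sup, id_eq, Finset.mem_univ, iff_true, Finset.mem_image]
    exact ⟨fiber (fib v), ⟨fib v, trivial, rfl⟩, hmemfib v⟩
  · -- not_bot_mem
    simp only [Finset.bot_eq_empty, Finset.mem_image]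
    rintro ⟨k, _, h⟩
    have h1 := hrep k
    rw [h] at h1
    exact absurd h1 (Finset.notMem_empty _)
  · -- the score bound
    rw [modScore]
    dsimp only
    rw [hsum_ein, hsum_vol, hG, wedgecount]
    have key : (3 + ((l:ℝ)-1))/(3*(l:ℝ)) - ((2*(l:ℝ)+4)^2 + ((l:ℝ)-1)*16)/(4*(3*(l:ℝ))^2)
        = (2*(l:ℝ)-2)/(9*(l:ℝ)) := by
      field_simp
      ring
    rw [key, div_le_div_iff₀ (by positivity) (by positivity)]
    nlinarith [sq_nonneg ((l:ℝ)-2)]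

/-- For `ℓ ≥ 2`, the windmill graph `W_ℓ` has conductance exactly `1/2` and
modularity at least `(6ℓ-8)/(9ℓ²) > 0`. -/
theorem stmt19 (l : ℕ) (hl : 2 ≤ l) :
    conduct (windmill l) = 1 / 2 ∧
    (6 * (l : ℝ) - 8) / (9 * (l : ℝ) ^ 2) ≤ modularity (windmill l) ∧
    0 < (6 * (l : ℝ) - 8) / (9 * (l : ℝ) ^ 2) := by
  refine ⟨windmill_conduct l hl, windmill_modularity l hl, ?_⟩
  have hl' : (2 : ℝ) ≤ l := by exact_mod_cast hl
  apply div_pos <;> nlinarith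
end
end
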